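/- Let z ∈ A be a unitary with z^N = 1, and let (q_{ij}) be a family in A satisfying the anyonic permutation relations together with z q_{ij} = ω^{j-i} q_{ij} z for all i,j. Set t_{ij} := z^i q_{ij}. Then the conjugate matrix t̄, with entries (t̄)_{ij} = t_{ij}*, satisfies (t̄)_{ij} = z^{-i}·(ω^{-i(j-i)} q_{ij}*), i.e. t̄ equals the matrix product D·q̄_R where D is the diagonal matrix with entries D_{ii} = z^{-i} and (q̄_R)_{ij} = ω^{-i(j-i)} q_{ij}*; consequently t̄ is an invertible element of the matrix algebra over A. -/
import Mathlib


noncomputable section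

/-- `ω ^ m` for `m ∈ ℤ/Nℤ`; this is well defined (independent of the chosen
representative) as soon as `ω ^ N = 1`. -/
def wpow (N : ℕ) (ω : ℂ) (m : ZMod N) : ℂ := ω ^ m.val

/-- `z ^ m` for `m ∈ ℤ/Nℤ`; well defined when `z ^ N = 1`. -/
def apow {A : Type*} [Monoid A] (N : ℕ) (z : A) (m : ZMod N) : A := z ^ m.val

/-- The anyonic permutation relations for a family `(q i j)` indexed by `ℤ/Nℤ × ℤ/Nℤ`. -/
def AnyonicPermRel (N : ℕ) [NeZero N] (ω : ℂ) {A : Type*} [Ring A] [StarRing A]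
    [Algebra ℂ A] (q : ZMod N → ZMod N → A) : Prop :=
  (∀ i : ZMod N, q 0 i = if i = 0 then 1 else 0) ∧
  (∀ i : ZMod N, q i 0 = if i = 0 then 1 else 0) ∧
  (∀ i j : ZMod N, star (q i j) = wpow N ω (-(i * (i - j))) • q (-i) (-j)) ∧
  (∀ i j k : ZMod N, q k (i + j) =
    ∑ l : ZMod N, wpow N ω (-(l * (i - k + l))) • (q (k - l) i * q l j)) ∧
  (∀ i j k : ZMod N, q (i + j) k =
    ∑ l : ZMod N, wpow N ω (-(i * (l - j))) • (q j l * q i (k - l)))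

/-- The untwisted relations for a family `(a i j)` indexed by `ℤ/Nℤ × ℤ/Nℤ`. -/
def UntwistedRel (N : ℕ) [NeZero N] {A : Type*} [Ring A] [StarRing A]
    (a : ZMod N → ZMod N → A) : Prop :=
  (∀ i : ZMod N, a i 0 = if i = 0 then 1 else 0) ∧
  (∀ i j : ZMod N, star (a i j) = a (-i) (-j)) ∧
  (∀ i j k : ZMod N, ∑ l : ZMod N, a (k - l) i * a l j = a k (i + j)) ∧
  (∀ i j k : ZMod N, ∑ l : ZMod N, a j l * a i (k - l) = a (i + j) k)

/-- A matrix `(m i j)` over a unital `*`-algebra is unitary. -/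
def IsUnitaryMatrix (N : ℕ) [NeZero N] {A : Type*} [Ring A] [StarRing A]
    (m : ZMod N → ZMod N → A) : Prop :=
  (∀ i j : ZMod N, ∑ k : ZMod N, star (m k i) * m k j = if i = j then 1 else 0) ∧
  (∀ i j : ZMod N, ∑ k : ZMod N, m i k * star (m j k) = if i = j then 1 else 0)

/-- The twisted conjugate matrix `ū_R` with entries `ω^{-i(j-i)} u_{ij}*`. -/
def conjR (N : ℕ) (ω : ℂ) {A : Type*} [Ring A] [StarRing A] [Algebra ℂ A]
    (u : ZMod N → ZMod N → A) : ZMod N → ZMod N → A :=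
  fun i j => wpow N ω (-(i * (j - i))) • star (u i j)

/-- A magic unitary: entries are projections and all rows and columns sum to `1`. -/
def IsMagicUnitary (N : ℕ) [NeZero N] {A : Type*} [Ring A] [StarRing A]
    (u : ZMod N → ZMod N → A) : Prop :=
  (∀ i j : ZMod N, u i j * u i j = u i j) ∧
  (∀ i j : ZMod N, star (u i j) = u i j) ∧
  (∀ j : ZMod N, ∑ i : ZMod N, u i j = 1) ∧
  (∀ i : ZMod N, ∑ j : ZMod N, u i j = 1)



section Helpers

variable {N : ℕ} [NeZero N]

lemma mpow_natCast_val {M : Type*} [Monoid M] {x : M} (h : x ^ N = 1) (n : ℕ) :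
    x ^ n = x ^ ((n : ZMod N)).val := by
  rw [ZMod.val_natCast]
  conv_lhs => rw [← Nat.div_add_mod n N]
  rw [pow_add, pow_mul, h, one_pow, one_mul]

lemma mpow_add {M : Type*} [Monoid M] {x : M} (h : x ^ N = 1) (a b : ZMod N) :
    x ^ (a + b).val = x ^ a.val * x ^ b.val := by
  have h2 : x ^ (a.val + b.val) = x ^ (((a.val + b.val : ℕ) : ZMod N)).val :=
    mpow_natCast_val h _
  rw [← pow_add, h2]
  congr 2
  · push_cast [ZMod.natCast_val, ZMod.cast_id]
    rfl

lemma mpow_pow {M : Type*} [Monoid M] {x : M} (h : x ^ N = 1) (a : ZMod N) (n : ℕ) :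
    (x ^ a.val) ^ n = x ^ (((n : ZMod N) * a).val) := by
  rw [← pow_mul, mpow_natCast_val h (a.val * n)]
  congr 2
  push_cast [ZMod.natCast_val, ZMod.cast_id]
  ring

lemma wpow_zero' (ω : ℂ) : wpow N ω 0 = 1 := by
  simp [wpow, ZMod.val_zero]

lemma wpow_add' {ω : ℂ} (hωN : ω ^ N = 1) (a b : ZMod N) :
    wpow N ω (a + b) = wpow N ω a * wpow N ω b :=
  mpow_add hωN a b

lemma wpow_neg_mul' {ω : ℂ} (hωN : ω ^ N = 1) (m : ZMod N) :
    wpow N ω m * wpow N ω (-m) = 1 := by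
  rw [← wpow_add' hωN, add_neg_cancel, wpow_zero']

lemma wpow_conj {ω : ℂ} (hωN : ω ^ N = 1) (m : ZMod N) :
    (starRingEnd ℂ) (wpow N ω m) = wpow N ω (-m) := by
  have hn : ‖ω‖ = 1 := Complex.norm_eq_one_of_pow_eq_one hωN (NeZero.ne N)
  calc (starRingEnd ℂ) (wpow N ω m) = (wpow N ω m)⁻¹ := by
        unfold wpow; rw [← inv_pow, Complex.inv_eq_conj hn, map_pow]
    _ = wpow N ω (-m) := inv_eq_of_mul_eq_one_right (wpow_neg_mul' hωN m)

lemma wpow_pow' {ω : ℂ} (hωN : ω ^ N = 1) (a : ZMod N) (n : ℕ) :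
    (wpow N ω a) ^ n = wpow N ω ((n : ZMod N) * a) :=
  mpow_pow hωN a n

end Helpers

theorem stmt_9 (N : ℕ) [NeZero N] (hN : 2 ≤ N) (ω : ℂ) (hω : IsPrimitiveRoot ω N)
    {A : Type*} [NormedRing A] [StarRing A] [CStarRing A]
    [NormedAlgebra ℂ A] [CompleteSpace A] [StarModule ℂ A]
    (z : A) (hz : star z * z = 1 ∧ z * star z = 1) (hzN : z ^ N = 1)
    (q : ZMod N → ZMod N → A) (hq : AnyonicPermRel N ω q)
    (hcomm : ∀ i j : ZMod N, z * q i j = wpow N ω (j - i) • (q i j * z)) :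
    (∀ i j : ZMod N, star (apow N z i * q i j) =
      apow N z (-i) * (wpow N ω (-(i * (j - i))) • star (q i j))) ∧
    (Matrix.of fun i j : ZMod N => star (apow N z i * q i j)) =
      (Matrix.of fun i j : ZMod N => if i = j then apow N z (-i) else 0) *
        (Matrix.of fun i j : ZMod N => conjR N ω q i j) ∧
    IsUnit (Matrix.of fun i j : ZMod N => star (apow N z i * q i j)) := by
  obtain ⟨hq0r, hqr0, hqstar, hq3, hq4⟩ := hq
  have hωN : ω ^ N = 1 := hω.pow_eq_one
  -- star z
  have hstarz : star z = z ^ (N - 1) := by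
    have h1 : z ^ N = z * z ^ (N - 1) := by
      conv_lhs => rw [show N = 1 + (N - 1) by omega]
      rw [pow_add, pow_one]
    calc star z = star z * z ^ N := by rw [hzN, mul_one]
      _ = star z * z * z ^ (N - 1) := by rw [h1, ← mul_assoc]
      _ = z ^ (N - 1) := by rw [hz.1, one_mul]
  have hstar_apow : ∀ i : ZMod N, star (apow N z i) = apow N z (-i) := by
    intro i
    have hcast : (((N - 1) * i.val : ℕ) : ZMod N) = -i := by
      push_cast [Nat.cast_sub (show 1 ≤ N by omega), ZMod.natCast_val, ZMod.cast_id]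
      simp [ZMod.natCast_self]
    unfold apow
    rw [star_pow, hstarz, ← pow_mul, mpow_natCast_val hzN, hcast]
  -- commutation of star (q i j) with z
  have hcstar : ∀ i j : ZMod N, star (q i j) * z = wpow N ω (j - i) • (z * star (q i j)) := by
    intro i j
    set c := wpow N ω (j - i) with hc
    have h1 : star (q i j) * star z = (starRingEnd ℂ) c • (star z * star (q i j)) := by
      have h := congrArg star (hcomm i j)
      simpa [star_mul, star_smul, Complex.star_def] using h
    have h2 : z * star (q i j) = (starRingEnd ℂ) c • (star (q i j) * z) := by
      have h := congrArg (fun y => z * y * z) h1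
      have lhs : z * (star (q i j) * star z) * z = z * star (q i j) := by
        rw [mul_assoc, mul_assoc, hz.1, mul_one]
      have rhs : z * ((starRingEnd ℂ) c • (star z * star (q i j))) * z
          = (starRingEnd ℂ) c • (star (q i j) * z) := by
        rw [mul_smul_comm, smul_mul_assoc]
        congr 1
        rw [← mul_assoc z (star z) _, hz.2, one_mul]
      rw [lhs, rhs] at h
      exact h
    have hcc : c * (starRingEnd ℂ) c = 1 := by
      rw [hc, wpow_conj hωN, wpow_neg_mul' hωN]
    calc star (q i j) * z = (c * (starRingEnd ℂ) c) • (star (q i j) * z) := by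
          rw [hcc, one_smul]
      _ = c • ((starRingEnd ℂ) c • (star (q i j) * z)) := by rw [smul_smul]
      _ = c • (z * star (q i j)) := by rw [← h2]
  have hcn : ∀ (i j : ZMod N) (n : ℕ), star (q i j) * z ^ n
      = (wpow N ω (j - i)) ^ n • (z ^ n * star (q i j)) := by
    intro i j n
    induction n with
    | zero => simp
    | succ n ih =>
      rw [pow_succ, ← mul_assoc, ih, smul_mul_assoc, mul_assoc, hcstar i j,
        mul_smul_comm, smul_smul, ← pow_succ]
      congr 1
      rw [← mul_assoc, ← pow_succ]
  -- Part 1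
  have part1 : ∀ i j : ZMod N, star (apow N z i * q i j) =
      apow N z (-i) * (wpow N ω (-(i * (j - i))) • star (q i j)) := by
    intro i j
    rw [star_mul, hstar_apow i]
    show star (q i j) * apow N z (-i) = _
    unfold apow
    rw [hcn i j (-i).val, mul_smul_comm]
    congr 1
    rw [wpow_pow' hωN]
    congr 1
    simp only [ZMod.natCast_val, ZMod.cast_id]
    ring
  -- key sum identities from the anyonic relations
  have key3 : ∀ i j : ZMod N,
      ∑ k : ZMod N, wpow N ω (k * (i - k)) • (q k i * q (-k) (-j))
        = if i = j then (1 : A) else 0 := by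
    intro i j
    have h := hq3 i (-j) 0
    rw [hq0r (i + -j)] at h
    have hif : (if i + -j = 0 then (1 : A) else 0) = if i = j then 1 else 0 := by
      congr 1
      simp [add_neg_eq_zero]
    rw [hif] at h
    calc ∑ k : ZMod N, wpow N ω (k * (i - k)) • (q k i * q (-k) (-j))
        = ∑ l : ZMod N, wpow N ω (-(l * (i - 0 + l))) • (q (0 - l) i * q l (-j)) := by
          apply Fintype.sum_equiv (Equiv.neg (ZMod N))
          intro k
          rw [Equiv.neg_apply, show (0 : ZMod N) - -k = k by ring,
            show -((-k) * (i - 0 + -k)) = k * (i - k) by ring]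
      _ = if i = j then 1 else 0 := h.symm
  have key4 : ∀ i j : ZMod N,
      ∑ k : ZMod N, wpow N ω (j * (k - i)) • (q (-i) (-k) * q j k)
        = if i = j then (1 : A) else 0 := by
    intro i j
    have h := hq4 j (-i) 0
    rw [hqr0 (j + -i)] at h
    have hif : (if j + -i = 0 then (1 : A) else 0) = if i = j then 1 else 0 := by
      congr 1
      simp [add_neg_eq_zero, eq_comm]
    rw [hif] at h
    calc ∑ k : ZMod N, wpow N ω (j * (k - i)) • (q (-i) (-k) * q j k)
        = ∑ l : ZMod N, wpow N ω (-(j * (l - -i))) • (q (-i) l * q j (0 - l)) := by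
          apply Fintype.sum_equiv (Equiv.neg (ZMod N))
          intro k
          rw [Equiv.neg_apply, show (0 : ZMod N) - -k = k by ring,
            show -(j * (-k - -i)) = j * (k - i) by ring]
      _ = if i = j then 1 else 0 := h.symm
  -- unitarity of conjR
  have hML : ∀ i j : ZMod N,
      ∑ k : ZMod N, star (conjR N ω q k i) * conjR N ω q k j
        = if i = j then (1 : A) else 0 := by
    intro i j
    have hterm : ∀ k : ZMod N, star (conjR N ω q k i) * conjR N ω q k j
        = wpow N ω (k * (i - k)) • (q k i * q (-k) (-j)) := by
      intro k
      unfold conjR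
      rw [star_smul, star_star, Complex.star_def, wpow_conj hωN, neg_neg, hqstar k j]
      rw [smul_smul, smul_mul_assoc, mul_smul_comm, smul_smul]
      congr 1
      rw [← wpow_add' hωN, ← wpow_add' hωN]
      congr 1
      ring
    simp only [hterm]
    exact key3 i j
  have hMR : ∀ i j : ZMod N,
      ∑ k : ZMod N, conjR N ω q i k * star (conjR N ω q j k)
        = if i = j then (1 : A) else 0 := by
    intro i j
    have hterm : ∀ k : ZMod N, conjR N ω q i k * star (conjR N ω q j k)
        = wpow N ω (j * (i - j)) • (wpow N ω (j * (k - i)) • (q (-i) (-k) * q j k)) := by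
      intro k
      unfold conjR
      rw [star_smul, star_star, Complex.star_def, wpow_conj hωN, neg_neg, hqstar i k]
      rw [smul_smul, smul_mul_assoc, mul_smul_comm, smul_smul, smul_smul]
      congr 1
      rw [← wpow_add' hωN, ← wpow_add' hωN, ← wpow_add' hωN]
      congr 1
      ring
    simp only [hterm]
    rw [← Finset.smul_sum, key4 i j]
    by_cases hij : i = j
    · simp [hij, wpow_zero']
    · simp [hij]
  -- apow multiplication
  have hapow : ∀ a b : ZMod N, apow N z a * apow N z b = apow N z (a + b) :=
    fun a b => (mpow_add hzN a b).symm
  have hapow0 : apow N z 0 = 1 := by simp [apow, ZMod.val_zero]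
  -- invertibility of D
  have hDdiag : (Matrix.of fun i j : ZMod N => if i = j then apow N z (-i) else 0)
      = Matrix.diagonal (fun i => apow N z (-i)) := rfl
  have hDunit : IsUnit (Matrix.of fun i j : ZMod N => if i = j then apow N z (-i) else 0) := by
    refine ⟨⟨_, Matrix.diagonal (fun i => apow N z i), ?_, ?_⟩, rfl⟩
    · rw [hDdiag, Matrix.diagonal_mul_diagonal, show (fun i : ZMod N => apow N z (-i) * apow N z i)
        = fun _ => (1 : A) from funext fun i => by rw [hapow, neg_add_cancel, hapow0],
        Matrix.diagonal_one]
    · rw [hDdiag, Matrix.diagonal_mul_diagonal, show (fun i : ZMod N => apow N z i * apow N z (-i))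
        = fun _ => (1 : A) from funext fun i => by rw [hapow, add_neg_cancel, hapow0],
        Matrix.diagonal_one]
  -- invertibility of conjR matrix
  have hMunit : IsUnit (Matrix.of fun i j : ZMod N => conjR N ω q i j) := by
    refine ⟨⟨_, Matrix.of fun i j : ZMod N => star (conjR N ω q j i), ?_, ?_⟩, rfl⟩
    · ext i j
      rw [Matrix.mul_apply]
      simp only [Matrix.of_apply]
      rw [hMR i j, Matrix.one_apply]
    · ext i j
      rw [Matrix.mul_apply]
      simp only [Matrix.of_apply]
      rw [hML i j, Matrix.one_apply]
  -- Part 2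
  have part2 : (Matrix.of fun i j : ZMod N => star (apow N z i * q i j)) =
      (Matrix.of fun i j : ZMod N => if i = j then apow N z (-i) else 0) *
        (Matrix.of fun i j : ZMod N => conjR N ω q i j) := by
    ext i j
    rw [Matrix.mul_apply]
    simp only [Matrix.of_apply, ite_mul, zero_mul]
    rw [Finset.sum_ite_eq (Finset.univ : Finset (ZMod N)) i
      (fun k => apow N z (-i) * conjR N ω q k j)]
    simp only [Finset.mem_univ, if_true]
    exact part1 i j
  refine ⟨part1, part2, ?_⟩
  rw [part2]
  exact hDunit.mul hMunit
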